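/- Let a Knapsack instance have n items with profits p_i ∈ ℕ, sizes s_i ∈ (0,1], capacity 1, and let ε ∈ (0,1], P = ⌈n²/ε⌉. Let p^OPT be the optimal profit and p^NN = max{ p·d_n : p ∈ [P], g(p,n) ≤ 1 } where g and d_n = max(1, (∑_j p_j)/P) come from the FPTAS-NN recursion. Then p^NN ≥ (1 - ε)·p^OPT. -/

import Mathlib

/-- The rounding granularity `d_i = max(1, (∑_{j ≤ i} p_j) / P)` of the FPTAS-NN. -/
noncomputable def granularity (P : ℕ) (pr : ℕ → ℕ) (i : ℕ) : ℝ :=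
  max 1 ((∑ j ∈ Finset.Icc 1 i, (pr j : ℝ)) / P)

/-!
Call a set `M ⊆ {1, …, i}` a witness for `(p, i)` when `p·d_i + c_i < ∑_{j ∈ M} p_j`, where `c_i`
bounds the rounding error of the first `i` levels of the recursion. By induction on `i`,
`g(p, i) ≤ ∑_{j ∈ M} s_j` for every witness: if `i ∉ M`, then `M` is a witness for `(p⁽¹⁾, i - 1)`,
and if `i ∈ M`, then `M \ {i}` is a witness for `(p⁽²⁾, i - 1)`, because rounding up to the coarser
grid `d_{i-1}` loses less than `d_{i-1}`. Applied to an optimal set `M`, every `p ≥ 1` with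
`p·d_n < p^OPT - c_n` has `g(p, n) ≤ 1`, hence `p^NN ≥ p^OPT - c_n - d_n`.

If `∑ p_j ≤ P`, every `d_i` is `1`, nothing is lost (`c ≡ -1`) and `p^NN ≥ p^OPT`. Otherwise
`c_i = (i - 1)·d_i` works, and `n·d_n = n·∑ p_j / P ≤ n²·p^OPT / P ≤ ε·p^OPT`.
-/

open Finset

section Granularity

variable (P : ℕ) (pr : ℕ → ℕ)

lemma one_le_granularity (i : ℕ) : 1 ≤ granularity P pr i :=
  le_max_left _ _

lemma granularity_pos (i : ℕ) : 0 < granularity P pr i :=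
  one_pos.trans_le (one_le_granularity P pr i)

lemma granularity_zero : granularity P pr 0 = 1 := by
  simp [granularity]

lemma granularity_mono : Monotone (granularity P pr) := fun _ _ hij =>
  max_le_max le_rfl <| div_le_div_of_nonneg_right
    (sum_le_sum_of_subset_of_nonneg (Icc_subset_Icc_right hij) fun _ _ _ => by positivity)
    (Nat.cast_nonneg P)

variable {P}

lemma sum_le_mul_granularity (hP : 0 < P) (i : ℕ) :
    ∑ j ∈ Icc 1 i, (pr j : ℝ) ≤ P * granularity P pr i := by
  rw [← div_le_iff₀' (by exact_mod_cast hP)]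
  exact le_max_right _ _

lemma granularity_eq_one_of_sum_le {i : ℕ} (h : ∑ j ∈ Icc 1 i, (pr j : ℝ) ≤ P) :
    granularity P pr i = 1 :=
  max_eq_left (div_le_one_of_le₀ h (Nat.cast_nonneg P))

lemma granularity_eq_div_of_lt_sum (hP : 0 < P) {i : ℕ} (h : (P : ℝ) < ∑ j ∈ Icc 1 i, (pr j : ℝ)) :
    granularity P pr i = (∑ j ∈ Icc 1 i, (pr j : ℝ)) / P :=
  max_eq_right ((one_le_div (by exact_mod_cast hP)).mpr h.le)

end Granularity

section Rounding

variable {a b d : ℝ}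

lemma exists_isLeast_int_le_mul_add (hd : 0 < d) : ∃ k : ℤ, IsLeast {k : ℤ | a ≤ k * d + b} k := by
  refine ⟨⌈(a - b) / d⌉, ?_⟩
  have hset : {k : ℤ | a ≤ k * d + b} = Set.Ici ⌈(a - b) / d⌉ := by
    ext k
    simp only [Set.mem_ofPred_eq, Set.mem_Ici, Int.ceil_le, div_le_iff₀ hd]
    constructor <;> intro h <;> linarith
  rw [hset]
  exact isLeast_Ici

lemma mul_add_lt_add_of_isLeast {k : ℤ} (hk : IsLeast {k : ℤ | a ≤ k * d + b} k) :
    k * d + b < a + d := by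
  by_contra! h
  have : k ≤ k - 1 := hk.2 (show a ≤ ((k - 1 : ℤ) : ℝ) * d + b by push_cast; linarith)
  omega

end Rounding

section Recursion

def FptasNNRecursion (n P : ℕ) (pr : ℕ → ℕ) (s : ℕ → ℝ) (g : ℕ → ℕ → ℝ) : Prop :=
  ∀ i ∈ Icc 1 n, ∀ p ∈ Icc 1 P, ∀ k1 k2 : ℤ,
    IsLeast {k : ℤ | (p : ℝ) * granularity P pr i ≤ (k : ℝ) * granularity P pr (i - 1)} k1 →
    IsLeast {k : ℤ | (p : ℝ) * granularity P pr i ≤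
      (k : ℝ) * granularity P pr (i - 1) + (pr i : ℝ)} k2 →
    g p i = min (if k1 ≤ (P : ℤ) then g k1.toNat (i - 1) else 2)
      (s i + if 1 ≤ k2 then g k2.toNat (i - 1) else 0)

/-- Passing from level `i` to `i - 1`, the recursion replaces `p` by the least `k` with
`p·d_i ≤ k·d_{i-1} + b`, where `b` is `0` or `p_i`; `c` absorbs the error of this rounding. -/
def IsRoundingSlack (n P : ℕ) (pr : ℕ → ℕ) (c : ℕ → ℝ) : Prop :=
  (∀ i ≤ n, -1 ≤ c i) ∧
    ∀ i ∈ Icc 1 n, ∀ p ∈ Icc 1 P, ∀ (b : ℕ) (k : ℤ),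
      IsLeast {k : ℤ | (p : ℝ) * granularity P pr i ≤ k * granularity P pr (i - 1) + b} k →
      k * granularity P pr (i - 1) + b + c (i - 1) ≤ p * granularity P pr i + c i

variable {n P : ℕ} {pr : ℕ → ℕ} {s : ℕ → ℝ} {g : ℕ → ℕ → ℝ} {c : ℕ → ℝ}

lemma isRoundingSlack_const (hd : ∀ i ≤ n, granularity P pr i = 1) :
    IsRoundingSlack n P pr fun _ => -1 := by
  refine ⟨fun _ _ => le_rfl, fun i hi p _ b k hk => ?_⟩
  have hi := (mem_Icc.mp hi).2
  rw [hd i hi, hd (i - 1) (by omega)] at hk ⊢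
  have : k ≤ p - b := hk.2 (by simp)
  have : (k : ℝ) ≤ p - b := by exact_mod_cast this
  linarith

lemma isRoundingSlack_linear :
    IsRoundingSlack n P pr fun i => ((i : ℝ) - 1) * granularity P pr i := by
  refine ⟨fun i _ => ?_, fun i hi p _ b k hk => ?_⟩
  · rcases i with _ | i
    · simp [granularity_zero]
    · have := granularity_pos P pr (i + 1)
      push_cast
      nlinarith
  · obtain ⟨i, rfl⟩ : ∃ j, i = j + 1 := ⟨i - 1, by grind⟩
    simp only [Nat.add_sub_cancel, Nat.cast_add, Nat.cast_one] at hk ⊢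
    have hround := mul_add_lt_add_of_isLeast hk
    have hmono : (i : ℝ) * granularity P pr i ≤ i * granularity P pr (i + 1) :=
      mul_le_mul_of_nonneg_left (granularity_mono P pr i.le_succ) i.cast_nonneg
    linarith

lemma toNat_mem_Icc_of_mul_granularity_lt (hP : 0 < P) {i : ℕ} {M : Finset ℕ}
    (hM : M ⊆ Icc 1 i) {k : ℤ} (hk : 0 < k) {c : ℝ} (hc : -1 ≤ c)
    (h : k * granularity P pr i + c < ∑ j ∈ M, (pr j : ℝ)) : k.toNat ∈ Icc 1 P := by
  have hsum : ∑ j ∈ M, (pr j : ℝ) ≤ P * granularity P pr i :=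
    (sum_le_sum_of_subset_of_nonneg hM fun _ _ _ => by positivity).trans
      (sum_le_mul_granularity pr hP i)
  have hd := one_le_granularity P pr i
  have : (k : ℝ) < P + 1 := lt_of_mul_lt_mul_right (by linarith) (zero_le_one.trans hd)
  have : k < P + 1 := by exact_mod_cast this
  exact mem_Icc.mpr ⟨by omega, by omega⟩

theorem FptasNNRecursion.le_sum_of_lt_sum (hrec : FptasNNRecursion n P pr s g)
    (hs : ∀ j, 0 ≤ s j) (hc : IsRoundingSlack n P pr c) :
    ∀ i ≤ n, ∀ M ⊆ Icc 1 i, ∀ p ∈ Icc 1 P,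
      p * granularity P pr i + c i < ∑ j ∈ M, (pr j : ℝ) → g p i ≤ ∑ j ∈ M, s j := by
  intro i
  induction i with
  | zero =>
    intro _ M hM p hp hlt
    obtain rfl : M = ∅ := subset_empty.mp (by simpa using hM)
    rw [sum_empty, granularity_zero] at hlt
    have : (1 : ℝ) ≤ p := by exact_mod_cast (mem_Icc.mp hp).1
    linarith [hc.1 0 (Nat.zero_le n)]
  | succ i ih =>
    intro hi M hM p hp hlt
    have hP : 0 < P := by have := mem_Icc.mp hp; omega
    have hi' : i + 1 ∈ Icc 1 n := mem_Icc.mpr ⟨by omega, hi⟩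
    have hd := granularity_pos P pr
    have descend : ∀ M' ⊆ Icc 1 i, ∀ k : ℤ, 0 < k →
        k * granularity P pr i + c i < ∑ j ∈ M', (pr j : ℝ) →
        k ≤ P ∧ g k.toNat i ≤ ∑ j ∈ M', s j := by
      intro M' hM' k hk hlt'
      have hkP := toNat_mem_Icc_of_mul_granularity_lt hP hM' hk (hc.1 i (by omega)) hlt'
      refine ⟨by have := (mem_Icc.mp hkP).2; omega, ih (by omega) M' hM' _ hkP ?_⟩
      rwa [show ((k.toNat : ℕ) : ℝ) = k by exact_mod_cast Int.toNat_of_nonneg hk.le]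
    obtain ⟨k₁, hk₁⟩ := exists_isLeast_int_le_mul_add (a := p * granularity P pr (i + 1)) (b := 0)
      (hd i)
    obtain ⟨k₂, hk₂⟩ := exists_isLeast_int_le_mul_add (a := p * granularity P pr (i + 1))
      (b := pr (i + 1)) (hd i)
    simp only [add_zero] at hk₁
    have hround₁ := hc.2 _ hi' p hp 0 k₁ (by simpa using hk₁)
    have hround₂ := hc.2 _ hi' p hp _ k₂ hk₂
    simp only [Nat.add_sub_cancel, Nat.cast_zero, add_zero] at hround₁ hround₂
    rw [hrec _ hi' p hp k₁ k₂ hk₁ hk₂, Nat.add_sub_cancel]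
    by_cases hiM : i + 1 ∈ M
    · have hM' : M.erase (i + 1) ⊆ Icc 1 i := fun j hj => by
        have := mem_Icc.mp (hM (mem_of_mem_erase hj))
        exact mem_Icc.mpr ⟨this.1, by have := ne_of_mem_erase hj; omega⟩
      rw [← add_sum_erase M _ hiM] at hlt ⊢
      refine (min_le_right _ _).trans ?_
      gcongr
      split_ifs with hk₂pos
      · exact (descend _ hM' k₂ hk₂pos (by linarith)).2
      · exact sum_nonneg fun j _ => hs j
    · have hM' : M ⊆ Icc 1 i := fun j hj => by
        have := mem_Icc.mp (hM hj)
        exact mem_Icc.mpr ⟨this.1, by have : j ≠ i + 1 := fun h => hiM (h ▸ hj); omega⟩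
      have hk₁pos : 0 < k₁ := by
        have hp0 : (0 : ℝ) < p := by exact_mod_cast (mem_Icc.mp hp).1
        have : (0 : ℝ) < k₁ * granularity P pr i := (mul_pos hp0 (hd (i + 1))).trans_le hk₁.1
        exact_mod_cast pos_of_mul_pos_left this (hd i).le
      obtain ⟨hk₁P, hg⟩ := descend M hM' k₁ hk₁pos (by linarith)
      exact (min_le_left _ _).trans (by rwa [if_pos hk₁P])

theorem FptasNNRecursion.sum_sub_le_of_isGreatest (hP : 0 < P) (hrec : FptasNNRecursion n P pr s g)
    (hs : ∀ j, 0 ≤ s j) (hc : IsRoundingSlack n P pr c) {M : Finset ℕ} (hM : M ⊆ Icc 1 n)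
    (hMs : ∑ j ∈ M, s j ≤ 1) {pNN : ℝ}
    (hNN : IsGreatest {x : ℝ | ∃ p ∈ Icc 1 P, g p n ≤ 1 ∧ x = p * granularity P pr n} pNN) :
    ∑ j ∈ M, (pr j : ℝ) - c n - granularity P pr n ≤ pNN := by
  have hd := granularity_pos P pr n
  obtain ⟨q, hq⟩ := exists_isLeast_int_le_mul_add (a := ∑ j ∈ M, (pr j : ℝ) - c n)
    (b := granularity P pr n) hd
  have hqle : ∑ j ∈ M, (pr j : ℝ) - c n ≤ q * granularity P pr n + granularity P pr n := hq.1
  have hqlt : q * granularity P pr n < ∑ j ∈ M, (pr j : ℝ) - c n := by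
    linarith [mul_add_lt_add_of_isLeast hq]
  rcases le_or_gt q 0 with hq0 | hq0
  · obtain ⟨p, hp, -, rfl⟩ := hNN.1
    have : (q : ℝ) * granularity P pr n ≤ 0 :=
      mul_nonpos_of_nonpos_of_nonneg (by exact_mod_cast hq0) hd.le
    have : (0 : ℝ) ≤ p * granularity P pr n := by positivity
    linarith
  · have hqP := toNat_mem_Icc_of_mul_granularity_lt hP hM hq0 (hc.1 n le_rfl) (by linarith)
    have hcast : ((q.toNat : ℕ) : ℝ) = q := by exact_mod_cast Int.toNat_of_nonneg hq0.le
    have hg := hrec.le_sum_of_lt_sum hs hc n le_rfl M hM _ hqP (by rw [hcast]; linarith)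
    have := hNN.2 ⟨q.toNat, hqP, hg.trans hMs, rfl⟩
    rw [hcast] at this
    linarith

end Recursion

lemma mul_granularity_le_of_lt_sum {n P : ℕ} {pr : ℕ → ℕ} {ε x : ℝ} (hε : 0 < ε)
    (hP : (n : ℝ) ^ 2 / ε ≤ P) (hP0 : 0 < P) (hS : (P : ℝ) < ∑ j ∈ Icc 1 n, (pr j : ℝ))
    (hSx : ∑ j ∈ Icc 1 n, (pr j : ℝ) ≤ n * x) (hx : 0 ≤ x) :
    n * granularity P pr n ≤ ε * x := by
  have hP0' : (0 : ℝ) < P := by exact_mod_cast hP0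
  rw [granularity_eq_div_of_lt_sum pr hP0 hS, mul_div_assoc', div_le_iff₀ hP0']
  have hn2 : (n : ℝ) ^ 2 ≤ ε * P := by rwa [div_le_iff₀' hε] at hP
  calc (n : ℝ) * ∑ j ∈ Icc 1 n, (pr j : ℝ) ≤ n * (n * x) := by gcongr
    _ = n ^ 2 * x := by ring
    _ ≤ ε * P * x := by gcongr
    _ = ε * x * P := by ring

theorem fptas_nn_approximation_general (n : ℕ) (hn : 1 ≤ n)
    (ε : ℝ) (hε : 0 < ε ∧ ε ≤ 1) (P : ℕ) (hP : P = ⌈(n : ℝ) ^ 2 / ε⌉₊)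
    (pr : ℕ → ℕ)
    (s : ℕ → ℝ) (hs : ∀ j, 0 < s j ∧ s j ≤ 1)
    (g : ℕ → ℕ → ℝ)
    (hgrec : ∀ i ∈ Finset.Icc 1 n, ∀ p ∈ Finset.Icc 1 P, ∀ k1 k2 : ℤ,
      IsLeast {k : ℤ | (p : ℝ) * granularity P pr i ≤ (k : ℝ) * granularity P pr (i - 1)} k1 →
      IsLeast {k : ℤ | (p : ℝ) * granularity P pr i ≤
        (k : ℝ) * granularity P pr (i - 1) + (pr i : ℝ)} k2 →
      g p i = min (if k1 ≤ (P : ℤ) then g k1.toNat (i - 1) else 2)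
        (s i + if 1 ≤ k2 then g k2.toNat (i - 1) else 0))
    (pOPT : ℝ)
    (hOPT : IsGreatest {x : ℝ | ∃ M : Finset ℕ, M ⊆ Finset.Icc 1 n ∧
      (∑ j ∈ M, s j) ≤ 1 ∧ x = ∑ j ∈ M, (pr j : ℝ)} pOPT)
    (pNN : ℝ)
    (hNN : IsGreatest {x : ℝ | ∃ p ∈ Finset.Icc 1 P, g p n ≤ 1 ∧
      x = (p : ℝ) * granularity P pr n} pNN) :
    (1 - ε) * pOPT ≤ pNN := by
  have hn0 : (0 : ℝ) < n := by exact_mod_cast hn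
  have hP0 : 0 < P := hP ▸ Nat.ceil_pos.mpr (div_pos (by positivity) hε.1)
  have hs0 : ∀ j, 0 ≤ s j := fun j => (hs j).1.le
  obtain ⟨⟨M, hM, hMs, rfl⟩, hOPT_max⟩ := hOPT
  have hOPT0 : 0 ≤ ∑ j ∈ M, (pr j : ℝ) := by positivity
  by_cases hS : ∑ j ∈ Icc 1 n, (pr j : ℝ) ≤ P
  · have hd : ∀ i ≤ n, granularity P pr i = 1 := fun i hi => granularity_eq_one_of_sum_le pr <|
      (sum_le_sum_of_subset_of_nonneg (Icc_subset_Icc_right hi) fun _ _ _ => by positivity).trans hS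
    have := FptasNNRecursion.sum_sub_le_of_isGreatest hP0 hgrec hs0 (isRoundingSlack_const hd)
      hM hMs hNN
    rw [hd n le_rfl] at this
    linarith [mul_nonneg hε.1.le hOPT0]
  · have := FptasNNRecursion.sum_sub_le_of_isGreatest hP0 hgrec hs0 isRoundingSlack_linear
      hM hMs hNN
    have hsingle : ∀ j ∈ Icc 1 n, (pr j : ℝ) ≤ ∑ j ∈ M, (pr j : ℝ) := fun j hj =>
      hOPT_max ⟨{j}, singleton_subset_iff.mpr hj, by simpa using (hs j).2, by simp⟩
    have hSn : ∑ j ∈ Icc 1 n, (pr j : ℝ) ≤ n * ∑ j ∈ M, (pr j : ℝ) := by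
      simpa using sum_le_card_nsmul _ _ _ hsingle
    have := mul_granularity_le_of_lt_sum hε.1 (hP ▸ Nat.le_ceil _) hP0 (not_le.mp hS) hSn hOPT0
    linarith

theorem fptas_nn_approximation (n : ℕ) (hn : 1 ≤ n)
    (ε : ℝ) (hε : 0 < ε ∧ ε ≤ 1) (P : ℕ) (hP : P = ⌈(n : ℝ) ^ 2 / ε⌉₊)
    (pr : ℕ → ℕ) (hpr : ∀ j, 1 ≤ pr j)
    (s : ℕ → ℝ) (hs : ∀ j, 0 < s j ∧ s j ≤ 1)
    (g : ℕ → ℕ → ℝ)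
    (hg0 : ∀ p ∈ Finset.Icc 1 P, g p 0 = 2)
    (hgrec : ∀ i ∈ Finset.Icc 1 n, ∀ p ∈ Finset.Icc 1 P, ∀ k1 k2 : ℤ,
      IsLeast {k : ℤ | (p : ℝ) * granularity P pr i ≤ (k : ℝ) * granularity P pr (i - 1)} k1 →
      IsLeast {k : ℤ | (p : ℝ) * granularity P pr i ≤
        (k : ℝ) * granularity P pr (i - 1) + (pr i : ℝ)} k2 →
      g p i = min (if k1 ≤ (P : ℤ) then g k1.toNat (i - 1) else 2)
        (s i + if 1 ≤ k2 then g k2.toNat (i - 1) else 0))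
    (pOPT : ℝ)
    (hOPT : IsGreatest {x : ℝ | ∃ M : Finset ℕ, M ⊆ Finset.Icc 1 n ∧
      (∑ j ∈ M, s j) ≤ 1 ∧ x = ∑ j ∈ M, (pr j : ℝ)} pOPT)
    (pNN : ℝ)
    (hNN : IsGreatest {x : ℝ | ∃ p ∈ Finset.Icc 1 P, g p n ≤ 1 ∧
      x = (p : ℝ) * granularity P pr n} pNN) :
    (1 - ε) * pOPT ≤ pNN :=
  fptas_nn_approximation_general n hn ε hε P hP pr s hs g hgrec pOPT hOPT pNN hNN
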